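/- Let d ≥ 1 and for each k = 1, …, d let μ_k and ν_k be probability measures on ℝ with ∫ s² dμ_k(s) < ∞ and ∫ t² dν_k(t) < ∞. Let μ = μ_1 ⊗ ⋯ ⊗ μ_d and ν = ν_1 ⊗ ⋯ ⊗ ν_d be the corresponding product probability measures on ℝ^d. Then the infimum over all couplings γ of μ and ν of ∫ Σ_{k=1}^{d} (x_k − y_k)² dγ(x, y) equals Σ_{k=1}^{d} (the infimum over all couplings γ_k of μ_k and ν_k of ∫ (s − t)² dγ_k(s, t)). -/
import Mathlib


open MeasureTheory
open scoped ENNReal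

lemma pi_map_eval' {d : ℕ} {α : Fin d → Type*} [∀ k, MeasurableSpace (α k)]
    (μ : ∀ k, Measure (α k)) [∀ k, IsProbabilityMeasure (μ k)] (k : Fin d) :
    (Measure.pi μ).map (Function.eval k) = μ k := by
  ext s hs
  rw [Measure.map_apply (measurable_pi_apply k) hs, Set.eval_preimage, Measure.pi_pi]
  rw [Finset.prod_eq_single k]
  · simp
  · intro j _ hj; simp [Function.update_of_ne hj]
  · simp

lemma cost_finite' (μ ν : Measure ℝ) [IsProbabilityMeasure μ] [IsProbabilityMeasure ν]
    (hμ2 : ∫⁻ s, ENNReal.ofReal (s ^ 2) ∂μ < ⊤) (hν2 : ∫⁻ t, ENNReal.ofReal (t ^ 2) ∂ν < ⊤) :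
    sInf {c : ℝ≥0∞ | ∃ γ : Measure (ℝ × ℝ), IsProbabilityMeasure γ ∧
        γ.map Prod.fst = μ ∧ γ.map Prod.snd = ν ∧
        c = ∫⁻ q, ENNReal.ofReal ((q.1 - q.2) ^ 2) ∂γ} < ⊤ := by
  have hmem : (∫⁻ q : ℝ × ℝ, ENNReal.ofReal ((q.1 - q.2) ^ 2) ∂(μ.prod ν)) ∈
      {c : ℝ≥0∞ | ∃ γ : Measure (ℝ × ℝ), IsProbabilityMeasure γ ∧
        γ.map Prod.fst = μ ∧ γ.map Prod.snd = ν ∧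
        c = ∫⁻ q, ENNReal.ofReal ((q.1 - q.2) ^ 2) ∂γ} :=
    ⟨μ.prod ν, inferInstance, by simp [Measure.map_fst_prod], by simp [Measure.map_snd_prod], rfl⟩
  refine lt_of_le_of_lt (sInf_le hmem) ?_
  have hb : ∀ q : ℝ × ℝ, ENNReal.ofReal ((q.1 - q.2) ^ 2)
      ≤ (ENNReal.ofReal (q.1 ^ 2) + ENNReal.ofReal (q.1 ^ 2))
        + (ENNReal.ofReal (q.2 ^ 2) + ENNReal.ofReal (q.2 ^ 2)) := by
    intro q
    rw [← ENNReal.ofReal_add (by positivity) (by positivity),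
        ← ENNReal.ofReal_add (by positivity) (by positivity),
        ← ENNReal.ofReal_add (by positivity) (by positivity)]
    exact ENNReal.ofReal_le_ofReal (by nlinarith [sq_nonneg (q.1 + q.2)])
  calc ∫⁻ q : ℝ × ℝ, ENNReal.ofReal ((q.1 - q.2) ^ 2) ∂(μ.prod ν)
      ≤ ∫⁻ q : ℝ × ℝ, (ENNReal.ofReal (q.1 ^ 2) + ENNReal.ofReal (q.1 ^ 2))
        + (ENNReal.ofReal (q.2 ^ 2) + ENNReal.ofReal (q.2 ^ 2)) ∂(μ.prod ν) :=
        lintegral_mono hb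
    _ = (∫⁻ q : ℝ × ℝ, ENNReal.ofReal (q.1 ^ 2) + ENNReal.ofReal (q.1 ^ 2) ∂(μ.prod ν))
        + ∫⁻ q : ℝ × ℝ, ENNReal.ofReal (q.2 ^ 2) + ENNReal.ofReal (q.2 ^ 2) ∂(μ.prod ν) := by
        apply lintegral_add_left; fun_prop
    _ < ⊤ := by
        have h1 : ∫⁻ q : ℝ × ℝ, ENNReal.ofReal (q.1 ^ 2) ∂(μ.prod ν)
            = ∫⁻ s, ENNReal.ofReal (s ^ 2) ∂μ := by
          have hf : (μ.prod ν).map Prod.fst = μ := by simp [Measure.map_fst_prod]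
          calc ∫⁻ q : ℝ × ℝ, ENNReal.ofReal (q.1 ^ 2) ∂(μ.prod ν)
              = ∫⁻ s, ENNReal.ofReal (s ^ 2) ∂((μ.prod ν).map Prod.fst) :=
                (lintegral_map (f := fun s : ℝ => ENNReal.ofReal (s ^ 2)) (by fun_prop) measurable_fst).symm
            _ = _ := by rw [hf]
        have h2 : ∫⁻ q : ℝ × ℝ, ENNReal.ofReal (q.2 ^ 2) ∂(μ.prod ν)
            = ∫⁻ t, ENNReal.ofReal (t ^ 2) ∂ν := by
          have hf : (μ.prod ν).map Prod.snd = ν := by simp [Measure.map_snd_prod]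
          calc ∫⁻ q : ℝ × ℝ, ENNReal.ofReal (q.2 ^ 2) ∂(μ.prod ν)
              = ∫⁻ t, ENNReal.ofReal (t ^ 2) ∂((μ.prod ν).map Prod.snd) :=
                (lintegral_map (f := fun t : ℝ => ENNReal.ofReal (t ^ 2)) (by fun_prop) measurable_snd).symm
            _ = _ := by rw [hf]
        rw [lintegral_add_left (by fun_prop), lintegral_add_left (by fun_prop), h1, h2]
        exact ENNReal.add_lt_top.2 ⟨ENNReal.add_lt_top.2 ⟨hμ2, hμ2⟩, ENNReal.add_lt_top.2 ⟨hν2, hν2⟩⟩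

/-- For product probability measures `μ = μ₁ ⊗ ⋯ ⊗ μ_d` and
`ν = ν₁ ⊗ ⋯ ⊗ ν_d` on `ℝ^d` with finite second moments in each coordinate, the
infimum of `∫ Σ_k (x_k - y_k)² dγ` over couplings `γ` of `μ` and `ν` equals the sum
over `k` of the infima of the one-dimensional quadratic transport costs between `μ_k`
and `ν_k`. -/
theorem quadratic_transport_cost_product_measures
    (d : ℕ) (hd : 1 ≤ d) (μ ν : Fin d → Measure ℝ)
    (hμp : ∀ k, IsProbabilityMeasure (μ k)) (hνp : ∀ k, IsProbabilityMeasure (ν k))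
    (hμ2 : ∀ k, ∫⁻ s, ENNReal.ofReal (s ^ 2) ∂(μ k) < ⊤)
    (hν2 : ∀ k, ∫⁻ t, ENNReal.ofReal (t ^ 2) ∂(ν k) < ⊤) :
    sInf {c : ℝ≥0∞ | ∃ γ : Measure ((Fin d → ℝ) × (Fin d → ℝ)),
        IsProbabilityMeasure γ ∧
        γ.map Prod.fst = Measure.pi μ ∧ γ.map Prod.snd = Measure.pi ν ∧
        c = ∫⁻ p, ∑ k, ENNReal.ofReal ((p.1 k - p.2 k) ^ 2) ∂γ}
      = ∑ k, sInf {c : ℝ≥0∞ | ∃ γ : Measure (ℝ × ℝ),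
        IsProbabilityMeasure γ ∧
        γ.map Prod.fst = μ k ∧ γ.map Prod.snd = ν k ∧
        c = ∫⁻ q, ENNReal.ofReal ((q.1 - q.2) ^ 2) ∂γ} := by
  haveI := hμp; haveI := hνp
  set S : Fin d → Set ℝ≥0∞ := fun k => {c : ℝ≥0∞ | ∃ γ : Measure (ℝ × ℝ),
        IsProbabilityMeasure γ ∧
        γ.map Prod.fst = μ k ∧ γ.map Prod.snd = ν k ∧
        c = ∫⁻ q, ENNReal.ofReal ((q.1 - q.2) ^ 2) ∂γ} with hS
  have hfin : ∀ k, sInf (S k) < ⊤ := fun k => cost_finite' (μ k) (ν k) (hμ2 k) (hν2 k)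
  apply le_antisymm
  · -- sInf LHS ≤ ∑ sInf
    refine ENNReal.le_of_forall_pos_le_add fun ε hε _ => ?_
    have hd0 : (d : ℝ≥0∞) ≠ 0 := by exact_mod_cast Nat.one_le_iff_ne_zero.mp hd
    have hεd : (0 : ℝ≥0∞) < ε / d :=
      ENNReal.div_pos (by exact_mod_cast hε.ne') (by simp)
    have hchoice : ∀ k, ∃ c ∈ S k, c < sInf (S k) + ε / d := by
      intro k
      exact sInf_lt_iff.mp (ENNReal.lt_add_right (hfin k).ne hεd.ne')
    choose c hc hclt using hchoice
    have hc' : ∀ k, ∃ γ : Measure (ℝ × ℝ), IsProbabilityMeasure γ ∧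
        γ.map Prod.fst = μ k ∧ γ.map Prod.snd = ν k ∧
        c k = ∫⁻ q, ENNReal.ofReal ((q.1 - q.2) ^ 2) ∂γ := hc
    choose γs hγp hγ1 hγ2 hγc using hc'
    haveI := hγp
    set T : (Fin d → ℝ × ℝ) → (Fin d → ℝ) × (Fin d → ℝ) :=
      fun f => (fun k => (f k).1, fun k => (f k).2) with hT
    have hTm : Measurable T := by
      refine Measurable.prod ?_ ?_ <;>
        exact measurable_pi_iff.mpr fun k => by fun_prop
    have hmem : (∑ k, c k) ∈ {c : ℝ≥0∞ | ∃ γ : Measure ((Fin d → ℝ) × (Fin d → ℝ)),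
        IsProbabilityMeasure γ ∧
        γ.map Prod.fst = Measure.pi μ ∧ γ.map Prod.snd = Measure.pi ν ∧
        c = ∫⁻ p, ∑ k, ENNReal.ofReal ((p.1 k - p.2 k) ^ 2) ∂γ} := by
      refine ⟨(Measure.pi γs).map T, Measure.isProbabilityMeasure_map hTm.aemeasurable, ?_, ?_, ?_⟩
      · rw [Measure.map_map measurable_fst hTm]
        exact (measurePreserving_pi γs μ fun k => ⟨measurable_fst, hγ1 k⟩).map_eq
      · rw [Measure.map_map measurable_snd hTm]
        exact (measurePreserving_pi γs ν fun k => ⟨measurable_snd, hγ2 k⟩).map_eq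
      · rw [lintegral_map (by fun_prop) hTm]
        have hfun : (fun f : Fin d → ℝ × ℝ =>
            ∑ k, ENNReal.ofReal (((T f).1 k - (T f).2 k) ^ 2))
              = fun f => ∑ k, ENNReal.ofReal (((f k).1 - (f k).2) ^ 2) := rfl
        rw [show (∫⁻ f, ∑ k, ENNReal.ofReal (((T f).1 k - (T f).2 k) ^ 2) ∂(Measure.pi γs))
            = ∫⁻ f, ∑ k, ENNReal.ofReal (((f k).1 - (f k).2) ^ 2) ∂(Measure.pi γs) from rfl]
        rw [lintegral_finset_sum _ (fun k _ => by fun_prop)]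
        congr 1
        funext k
        rw [hγc k]
        calc ∫⁻ q, ENNReal.ofReal ((q.1 - q.2) ^ 2) ∂(γs k)
            = ∫⁻ q, ENNReal.ofReal ((q.1 - q.2) ^ 2) ∂((Measure.pi γs).map (Function.eval k)) := by
              rw [pi_map_eval']
          _ = ∫⁻ f, ENNReal.ofReal (((f k).1 - (f k).2) ^ 2) ∂(Measure.pi γs) :=
              lintegral_map (by fun_prop) (measurable_pi_apply k)
    calc sInf _ ≤ ∑ k, c k := sInf_le hmem
      _ ≤ ∑ k, (sInf (S k) + ε / d) := Finset.sum_le_sum fun k _ => (hclt k).le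
      _ = (∑ k, sInf (S k)) + d * (ε / d) := by
          rw [Finset.sum_add_distrib]; simp [Finset.card_univ, mul_comm]
      _ = (∑ k, sInf (S k)) + ε := by
          rw [mul_comm, ENNReal.div_mul_cancel hd0 (by simp)]
  · -- ∑ sInf ≤ sInf LHS
    refine le_sInf ?_
    rintro c ⟨γ, hγp, h1, h2, rfl⟩
    rw [lintegral_finset_sum _ (fun k _ => by fun_prop)]
    refine Finset.sum_le_sum fun k _ => ?_
    set m : ((Fin d → ℝ) × (Fin d → ℝ)) → ℝ × ℝ := fun p => (p.1 k, p.2 k) with hm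
    have hmm : Measurable m := by fun_prop
    refine sInf_le ⟨γ.map m, Measure.isProbabilityMeasure_map hmm.aemeasurable, ?_, ?_, ?_⟩
    · rw [Measure.map_map measurable_fst hmm]
      have : (Prod.fst ∘ m) = (Function.eval k) ∘ (Prod.fst :
          ((Fin d → ℝ) × (Fin d → ℝ)) → (Fin d → ℝ)) := rfl
      rw [this, ← Measure.map_map (measurable_pi_apply k) measurable_fst, h1, pi_map_eval']
    · rw [Measure.map_map measurable_snd hmm]
      have : (Prod.snd ∘ m) = (Function.eval k) ∘ (Prod.snd :
          ((Fin d → ℝ) × (Fin d → ℝ)) → (Fin d → ℝ)) := rfl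
      rw [this, ← Measure.map_map (measurable_pi_apply k) measurable_snd, h2, pi_map_eval']
    · rw [lintegral_map (by fun_prop) hmm]
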